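/- arXiv:2101.10058 — 3 statements merged into one kernel-verified Lean document; each statement's English description precedes it below -/
import Mathlib

section
/- Let X₁,...,Xₙ be unit vectors in ℝ^(q+1), h > 0, and L : [0,∞) → [0,∞) be non-increasing, differentiable, and convex with 0 < L(0) < ∞. Fix a unit vector μ and suppose s := -∑ᵢ Xᵢ L'((1 - Xᵢᵀμ)/h²) is nonzero; define μ⁺ = s/‖s‖₂. Then ∑ᵢ L'((1 - Xᵢᵀμ)/h²)·Xᵢᵀ(μ - μ⁺) = ‖s‖₂·(μ⁺)ᵀ(μ⁺ - μ) = (‖s‖₂/2)·‖μ⁺ - μ‖₂² ≥ 0. -/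
theorem stmt_4 (q n : ℕ) (X : Fin n → EuclideanSpace ℝ (Fin (q + 1)))
    (hX : ∀ i, ‖X i‖ = 1) (h : ℝ) (hh : 0 < h)
    (L L' : ℝ → ℝ)
    (hmono : AntitoneOn L (Set.Ici (0 : ℝ)))
    (hderiv : ∀ r ∈ Set.Ici (0 : ℝ), HasDerivAt L (L' r) r)
    (hconv : ConvexOn ℝ (Set.Ici (0 : ℝ)) L)
    (hL0 : 0 < L 0)
    (μ : EuclideanSpace ℝ (Fin (q + 1))) (hμ : ‖μ‖ = 1)
    (s : EuclideanSpace ℝ (Fin (q + 1)))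
    (hs : s = -∑ i, L' ((1 - inner ℝ (X i) μ) / h ^ 2) • X i)
    (hs0 : s ≠ 0)
    (μplus : EuclideanSpace ℝ (Fin (q + 1)))
    (hμplus : μplus = ‖s‖⁻¹ • s) :
    (∑ i, L' ((1 - inner ℝ (X i) μ) / h ^ 2) * (inner ℝ (X i) (μ - μplus) : ℝ)
        = ‖s‖ * inner ℝ μplus (μplus - μ)) ∧
    (‖s‖ * (inner ℝ μplus (μplus - μ) : ℝ) = ‖s‖ / 2 * ‖μplus - μ‖ ^ 2) ∧
    0 ≤ ‖s‖ / 2 * ‖μplus - μ‖ ^ 2 := by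
  have hsn : (0:ℝ) < ‖s‖ := norm_pos_iff.mpr hs0
  have hsμ : s = ‖s‖ • μplus := by
    rw [hμplus, smul_smul, mul_inv_cancel₀ hsn.ne', one_smul]
  have hμp1 : ‖μplus‖ = 1 := by
    rw [hμplus, norm_smul, norm_inv, norm_norm, inv_mul_cancel₀ hsn.ne']
  have h1 : ∑ i, L' ((1 - inner ℝ (X i) μ) / h ^ 2) * (inner ℝ (X i) (μ - μplus) : ℝ)
      = ‖s‖ * inner ℝ μplus (μplus - μ) := by
    have : (∑ i, L' ((1 - inner ℝ (X i) μ) / h ^ 2) * (inner ℝ (X i) (μ - μplus) : ℝ))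
        = inner ℝ (∑ i, L' ((1 - inner ℝ (X i) μ) / h ^ 2) • X i) (μ - μplus) := by
      rw [sum_inner]
      exact Finset.sum_congr rfl fun i _ => (real_inner_smul_left _ _ _).symm
    rw [this]
    have hsum : (∑ i, L' ((1 - inner ℝ (X i) μ) / h ^ 2) • X i) = -s := by
      rw [hs, neg_neg]
    rw [hsum, inner_neg_left, show μ - μplus = -(μplus - μ) by abel, inner_neg_right, neg_neg]
    conv_lhs => rw [hsμ]
    exact real_inner_smul_left _ _ _
  refine ⟨h1, ?_, ?_⟩
  · have hexp : ‖μplus - μ‖ ^ 2 = 2 * inner ℝ μplus (μplus - μ) := by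
      rw [norm_sub_sq_real, inner_sub_right, real_inner_self_eq_norm_sq, hμp1, hμ]
      ring
    rw [hexp]; ring
  · have : (0:ℝ) ≤ ‖μplus - μ‖ ^ 2 := sq_nonneg _
    positivity
end

section
/- Let X₁,...,Xₙ be unit vectors in ℝ^(q+1), h > 0, and L non-increasing, differentiable, convex with 0 < L(0) < ∞ and L > 0. Define the directional KDE f̂(x) = (c/n)·∑ᵢ L((1 - xᵀXᵢ)/h²) for a constant c > 0, and let the mean shift sequence μ^(t+1) be the mean shift update of μ^(t) (whenever defined). Then the sequence f̂(μ^(t)) is non-decreasing in t. -/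
lemma support_line_aux {L L' : ℝ → ℝ}
    (hconv : ConvexOn ℝ (Set.Ici (0 : ℝ)) L)
    (hderiv : ∀ r ∈ Set.Ici (0 : ℝ), HasDerivAt L (L' r) r)
    {a b : ℝ} (ha : a ∈ Set.Ici (0 : ℝ)) (hb : b ∈ Set.Ici (0 : ℝ)) :
    L a + L' a * (b - a) ≤ L b := by
  rcases lt_trichotomy a b with hab | rfl | hab
  · have h1 := hconv.le_slope_of_hasDerivAt ha hb hab (hderiv a ha)
    rw [slope_def_field, div_eq_inv_mul] at h1
    have h2 : L' a * (b - a) ≤ L b - L a := by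
      have hpos : (0:ℝ) < b - a := sub_pos.2 hab
      calc L' a * (b - a) ≤ ((b - a)⁻¹ * (L b - L a)) * (b - a) := by
            exact mul_le_mul_of_nonneg_right h1 hpos.le
        _ = L b - L a := by field_simp
    linarith
  · simp
  · have h1 := hconv.slope_le_of_hasDerivAt hb ha hab (hderiv a ha)
    rw [slope_def_field, div_eq_inv_mul] at h1
    have hpos : (0:ℝ) < a - b := sub_pos.2 hab
    have h2 : L a - L b ≤ L' a * (a - b) := by
      calc L a - L b = ((a - b)⁻¹ * (L a - L b)) * (a - b) := by field_simp
        _ ≤ L' a * (a - b) := mul_le_mul_of_nonneg_right h1 hpos.le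
    have h3 : L' a * (b - a) = -(L' a * (a - b)) := by ring
    linarith

theorem stmt_6 (q n : ℕ) (X : Fin n → EuclideanSpace ℝ (Fin (q + 1)))
    (hX : ∀ i, ‖X i‖ = 1) (h : ℝ) (hh : 0 < h)
    (L L' : ℝ → ℝ)
    (hpos : ∀ r ∈ Set.Ici (0 : ℝ), 0 < L r)
    (hmono : AntitoneOn L (Set.Ici (0 : ℝ)))
    (hderiv : ∀ r ∈ Set.Ici (0 : ℝ), HasDerivAt L (L' r) r)
    (hconv : ConvexOn ℝ (Set.Ici (0 : ℝ)) L)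
    (hL0 : 0 < L 0)
    (c : ℝ) (hc : 0 < c)
    (fhat : EuclideanSpace ℝ (Fin (q + 1)) → ℝ)
    (hfhat : ∀ x, fhat x = c / n * ∑ i, L ((1 - inner ℝ x (X i)) / h ^ 2))
    (μ : ℕ → EuclideanSpace ℝ (Fin (q + 1)))
    (hμ : ∀ t, ‖μ t‖ = 1)
    (hstep : ∀ t,
      (∑ i, L' ((1 - inner ℝ (X i) (μ t)) / h ^ 2) • X i) ≠ 0 ∧
      μ (t + 1) = ‖-∑ i, L' ((1 - inner ℝ (X i) (μ t)) / h ^ 2) • X i‖⁻¹ •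
        (-∑ i, L' ((1 - inner ℝ (X i) (μ t)) / h ^ 2) • X i)) :
    Monotone fun t => fhat (μ t) := by
  apply monotone_nat_of_le_succ
  intro t
  simp only [hfhat]
  obtain ⟨hmne, hstep'⟩ := hstep t
  have hcomm : ∀ i, (inner ℝ (X i) (μ t) : ℝ) = inner ℝ (μ t) (X i) :=
    fun i => real_inner_comm _ _
  simp_rw [hcomm] at hmne hstep'
  set a : Fin n → ℝ := fun i => (1 - inner ℝ (μ t) (X i)) / h ^ 2 with ha_def
  set b : Fin n → ℝ := fun i => (1 - inner ℝ (μ (t+1)) (X i)) / h ^ 2 with hb_def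
  set m : EuclideanSpace ℝ (Fin (q + 1)) := ∑ i, L' (a i) • X i with hm_def
  -- membership
  have hip : ∀ (s : ℕ) i, (inner ℝ (μ s) (X i) : ℝ) ≤ 1 := by
    intro s i
    calc (inner ℝ (μ s) (X i) : ℝ) ≤ ‖μ s‖ * ‖X i‖ := real_inner_le_norm _ _
      _ = 1 := by rw [hμ, hX, one_mul]
  have hamem : ∀ i, a i ∈ Set.Ici (0:ℝ) := fun i =>
    show (0:ℝ) ≤ (1 - inner ℝ (μ t) (X i)) / h ^ 2 from div_nonneg (by linarith [hip t i]) (by positivity)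
  have hbmem : ∀ i, b i ∈ Set.Ici (0:ℝ) := fun i =>
    show (0:ℝ) ≤ (1 - inner ℝ (μ (t+1)) (X i)) / h ^ 2 from div_nonneg (by linarith [hip (t+1) i]) (by positivity)
  -- inner products with m
  have hinner : ∀ y : EuclideanSpace ℝ (Fin (q + 1)),
      (inner ℝ y m : ℝ) = ∑ i, L' (a i) * inner ℝ y (X i) := by
    intro y
    rw [hm_def, inner_sum]
    simp only [real_inner_smul_right]
  have hnorm_ne : ‖m‖ ≠ 0 := norm_ne_zero_iff.2 hmne
  have hμ1m : (inner ℝ (μ (t+1)) m : ℝ) = -‖m‖ := by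
    rw [hstep', real_inner_smul_left, inner_neg_left, real_inner_self_eq_norm_sq,
      norm_neg]
    field_simp
  have hμtm : -‖m‖ ≤ (inner ℝ (μ t) m : ℝ) := by
    have h1 := abs_real_inner_le_norm (μ t) m
    rw [hμ t, one_mul] at h1
    linarith [neg_abs_le (inner ℝ (μ t) m : ℝ)]
  -- the key nonnegative sum
  have hS : 0 ≤ ∑ i, L' (a i) * (b i - a i) := by
    have hcalc : ∑ i, L' (a i) * (b i - a i)
        = ((inner ℝ (μ t) m : ℝ) - (inner ℝ (μ (t+1)) m : ℝ)) / h ^ 2 := by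
      rw [hinner, hinner, ← Finset.sum_sub_distrib, Finset.sum_div]
      apply Finset.sum_congr rfl
      intro i _
      rw [ha_def, hb_def]
      have hh2 : (h:ℝ) ^ 2 ≠ 0 := by positivity
      field_simp
      ring
    rw [hcalc, hμ1m]
    apply div_nonneg _ (by positivity)
    linarith
  -- conclude
  have hsum : ∑ i, L (a i) ≤ ∑ i, L (b i) := by
    have h1 : ∑ i, (L (a i) + L' (a i) * (b i - a i)) ≤ ∑ i, L (b i) :=
      Finset.sum_le_sum fun i _ =>
        support_line_aux hconv hderiv (hamem i) (hbmem i)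
    rw [Finset.sum_add_distrib] at h1
    linarith
  exact mul_le_mul_of_nonneg_left hsum (div_nonneg hc.le (Nat.cast_nonneg n))
end

section
/- Let f̂ be twice continuously differentiable on ℝ^(q+1), m a point with ∇f̂(m) ≠ 0 and ∇f̂(m)/‖∇f̂(m)‖₂ = m (so m is a fixed point of F(x) = ∇f̂(x)/‖∇f̂(x)‖₂ with ‖m‖₂ = 1). Then the Jacobian of F at m equals (I_{q+1} − m mᵀ)∇∇f̂(m)/‖∇f̂(m)‖₂. -/
theorem stmt_9 (q : ℕ) (fhat : EuclideanSpace ℝ (Fin (q + 1)) → ℝ)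
    (hf : ContDiff ℝ 2 fhat)
    (F : EuclideanSpace ℝ (Fin (q + 1)) → EuclideanSpace ℝ (Fin (q + 1)))
    (hF : ∀ y, F y = ‖gradient fhat y‖⁻¹ • gradient fhat y)
    (m : EuclideanSpace ℝ (Fin (q + 1))) (hm : gradient fhat m ≠ 0)
    (hfix : ‖gradient fhat m‖⁻¹ • gradient fhat m = m) :
    ∀ v, fderiv ℝ F m v =
      ‖gradient fhat m‖⁻¹ •
        (fderiv ℝ (gradient fhat) m v -
          (inner ℝ m (fderiv ℝ (gradient fhat) m v) : ℝ) • m) := by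
  intro v
  set g : EuclideanSpace ℝ (Fin (q + 1)) → EuclideanSpace ℝ (Fin (q + 1)) := gradient fhat with hgdef
  have hdfderiv : Differentiable ℝ (fderiv ℝ fhat) :=
    (hf.fderiv_right (le_refl 2)).differentiable one_ne_zero
  have hdg : Differentiable ℝ g := by
    have : g = fun y => (InnerProductSpace.toDual ℝ _).symm (fderiv ℝ fhat y) := rfl
    rw [this]
    exact fun x => ((InnerProductSpace.toDual ℝ _).symm.toContinuousLinearEquiv.differentiable.differentiableAt).comp x (hdfderiv x)
  set A := fderiv ℝ g m with hA
  have hgA : HasFDerivAt g A m := (hdg m).hasFDerivAt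
  set r : ℝ := ‖g m‖ with hr
  have hr0 : r ≠ 0 := norm_ne_zero_iff.2 hm
  have hgm : g m = r • m := by
    calc g m = r • (r⁻¹ • g m) := by rw [smul_smul, mul_inv_cancel₀ hr0, one_smul]
    _ = r • m := by rw [hfix]
  have hm1 : ‖m‖ = 1 := by
    rw [← hfix, norm_smul, norm_inv, norm_norm]
    exact inv_mul_cancel₀ hr0
  have hrm : ‖r • m‖ = r := by
    rw [norm_smul, hm1, mul_one, hr, norm_norm]
  -- derivative of x ↦ ‖g x‖ ^ 2
  have hns : HasFDerivAt (fun x => ‖g x‖ ^ 2) (2 • (innerSL ℝ (g m)).comp A) m := hgA.norm_sq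
  have hsq : HasDerivAt Real.sqrt (1 / (2 * Real.sqrt (r ^ 2))) (r ^ 2) :=
    Real.hasDerivAt_sqrt (pow_ne_zero 2 hr0)
  have h2 : HasFDerivAt (fun x => Real.sqrt (‖g x‖ ^ 2))
      ((1 / (2 * Real.sqrt (r ^ 2))) • (2 • (innerSL ℝ (g m)).comp A)) m :=
    hsq.comp_hasFDerivAt m hns
  have heq : (fun x => Real.sqrt (‖g x‖ ^ 2)) = fun x => ‖g x‖ :=
    funext fun x => Real.sqrt_sq (norm_nonneg _)
  rw [heq] at h2
  have h4 : HasFDerivAt (fun x => (‖g x‖)⁻¹)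
      (-(r ^ 2)⁻¹ • ((1 / (2 * Real.sqrt (r ^ 2))) • (2 • (innerSL ℝ (g m)).comp A))) m :=
    (hasDerivAt_inv hr0).comp_hasFDerivAt m h2
  have hFeq : F = fun y => (‖g y‖)⁻¹ • g y := funext hF
  have h5 : HasFDerivAt F
      ((‖g m‖)⁻¹ • A +
        (-(r ^ 2)⁻¹ • ((1 / (2 * Real.sqrt (r ^ 2))) • (2 • (innerSL ℝ (g m)).comp A))).smulRight (g m)) m := by
    rw [hFeq]; exact h4.smul hgA
  rw [h5.fderiv]
  simp only [ContinuousLinearMap.add_apply, ContinuousLinearMap.smul_apply,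
    ContinuousLinearMap.smulRight_apply, ContinuousLinearMap.comp_apply, innerSL_apply_apply,
    Real.sqrt_sq (norm_nonneg (g m)), show Real.sqrt (r ^ 2) = r from Real.sqrt_sq (norm_nonneg (g m)), hgm, hrm, real_inner_smul_left, smul_smul]
  rw [smul_sub]
  match_scalars <;> field_simp <;> try ring
  rw [mul_right_comm, ← mul_pow, mul_inv_cancel₀ hr0, one_pow, one_mul]
end
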